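/- arXiv:2110.12306 — 3 statements merged into one kernel-verified Lean document; each statement's English description precedes it below -/
import Mathlib

section
/- Assume the finite discounted MDP setting with μ(s) > 0 for every s ∈ S. Let v* : S → ℝ and d* : S×A → ℝ with d* entrywise nonnegative form a saddle point of the Lagrangian L, i.e., L(v*, d) ≤ L(v*, d*) ≤ L(v, d*) for every v : S → ℝ and every entrywise-nonnegative d : S×A → ℝ. Then: (i) Σ_s μ(s) v*(s) equals the supremum over all stationary policies π of the discounted return J(π); (ii) Σ_a d*(s,a) > 0 for every s ∈ S, and the stationary policy π* defined by π*(a|s) = d*(s,a) / Σ_{a'} d*(s,a') satisfies J(π*) = sup_π J(π). -/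
noncomputable section

variable {S A : Type*}

/-- A stationary policy: a probability vector over actions for every state. -/
def IsPolicy [Fintype A] (π : S → A → ℝ) : Prop :=
  ∀ s, (∀ a, 0 ≤ π s a) ∧ ∑ a, π s a = 1

/-- The advantage function `A_v(s,a) = Σ_{s'} P(s'|s,a)(r(s,a,s') + γ v(s')) − v(s)`. -/
def adv [Fintype S] (P : S → A → S → ℝ) (r : S → A → S → ℝ) (γ : ℝ)
    (v : S → ℝ) (s : S) (a : A) : ℝ :=
  (∑ s', P s a s' * (r s a s' + γ * v s')) - v s

/-- The state transition matrix `P_π(s,s') = Σ_a π(a|s) P(s'|s,a)` induced by a policy. -/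
def Pmat [Fintype A] (P : S → A → S → ℝ) (π : S → A → ℝ) : Matrix S S ℝ :=
  Matrix.of fun s s' => ∑ a, π s a * P s a s'

/-- The expected one-step reward `r_π(s) = Σ_a π(a|s) Σ_{s'} P(s'|s,a) r(s,a,s')`. -/
def rvec [Fintype S] [Fintype A] (P : S → A → S → ℝ) (r : S → A → S → ℝ)
    (π : S → A → ℝ) (s : S) : ℝ :=
  ∑ a, π s a * ∑ s', P s a s' * r s a s'

/-- The value function `v^π = (I − γ P_π)^{-1} r_π` of a stationary policy. -/
def valueFn [Fintype S] [Fintype A] [DecidableEq S] (P : S → A → S → ℝ)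
    (r : S → A → S → ℝ) (γ : ℝ) (π : S → A → ℝ) : S → ℝ :=
  (1 - γ • Pmat P π)⁻¹.mulVec (rvec P r π)

/-- The discounted return `J(π) = Σ_s μ(s) v^π(s)`. -/
def Jret [Fintype S] [Fintype A] [DecidableEq S] (P : S → A → S → ℝ)
    (r : S → A → S → ℝ) (γ : ℝ) (μ : S → ℝ) (π : S → A → ℝ) : ℝ :=
  ∑ s, μ s * valueFn P r γ π s

/-- The Lagrangian `L(v,d) = Σ_s μ(s) v(s) + Σ_{(s,a)} d(s,a) A_v(s,a)`. -/
def Lagr [Fintype S] [Fintype A] (P : S → A → S → ℝ) (r : S → A → S → ℝ)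
    (γ : ℝ) (μ : S → ℝ) (v : S → ℝ) (d : S → A → ℝ) : ℝ :=
  (∑ s, μ s * v s) + ∑ s, ∑ a, d s a * adv P r γ v s a

/-! The Lagrangian is affine in each argument. Maximality of `d*` on the nonnegative orthant
forces `A_{v*} ≤ 0` together with complementary slackness `d* A_{v*} = 0`. Minimality of `v*`
forces the coefficient of `v` to vanish; this is the flow constraint
`Σ_a d*(s,a) = μ(s) + γ Σ_{s',a} d*(s',a) P(s|s',a)`, so every state marginal of `d*` is at least
`μ(s) > 0`. Finally `I − γ P_π` is inverse-positive for a row-stochastic `P_π` (maximum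
principle), so `A_{v*} ≤ 0` gives `v^π ≤ v*` for every policy `π`, while complementary slackness
makes `v*` the value function of `π*`. -/

open Finset Matrix

section LinearFunctional

variable {ι : Type*} [Fintype ι]

lemma nonpos_of_forall_sum_mul_le {c x₀ : ι → ℝ} (hx₀ : 0 ≤ x₀)
    (h : ∀ x : ι → ℝ, 0 ≤ x → ∑ i, x i * c i ≤ ∑ i, x₀ i * c i) : c ≤ 0 := by
  classical
  intro i
  simpa [add_mul, sum_add_distrib, Pi.single_apply] using
    h (x₀ + Pi.single i 1) (add_nonneg hx₀ (Pi.single_nonneg.2 zero_le_one))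

lemma mul_eq_zero_of_forall_sum_mul_le {c x₀ : ι → ℝ} (hx₀ : 0 ≤ x₀)
    (h : ∀ x : ι → ℝ, 0 ≤ x → ∑ i, x i * c i ≤ ∑ i, x₀ i * c i) (i : ι) : x₀ i * c i = 0 := by
  have hterm : ∀ j ∈ univ, x₀ j * c j ≤ 0 := fun j _ =>
    mul_nonpos_of_nonneg_of_nonpos (hx₀ j) (nonpos_of_forall_sum_mul_le hx₀ h j)
  have hsum : 0 ≤ ∑ j, x₀ j * c j := by simpa using h 0 le_rfl
  exact (sum_eq_zero_iff_of_nonpos hterm).1 (le_antisymm (sum_nonpos hterm) hsum) i (mem_univ i)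

lemma eq_zero_of_forall_sum_mul_le {c v₀ : ι → ℝ}
    (h : ∀ v : ι → ℝ, ∑ i, v₀ i * c i ≤ ∑ i, v i * c i) : c = 0 := by
  have hsq : ∑ i, c i * c i ≤ 0 := by
    simpa [sub_mul, sum_sub_distrib] using h (v₀ - c)
  have hsq' := le_antisymm hsq (sum_nonneg fun i _ => mul_self_nonneg (c i))
  funext i
  exact mul_self_eq_zero.1 ((sum_eq_zero_iff_of_nonneg fun j _ => mul_self_nonneg (c j)).1
    hsq' i (mem_univ i))

end LinearFunctional

section InversePositivity

variable {n : Type*} [Fintype n] [DecidableEq n] {M : Matrix n n ℝ} {γ : ℝ}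

lemma one_sub_smul_mulVec_apply (w : n → ℝ) (i : n) :
    ((1 - γ • M) *ᵥ w) i = w i - γ * (M *ᵥ w) i := by
  simp only [sub_mulVec, one_mulVec, smul_mulVec, Pi.sub_apply, Pi.smul_apply, smul_eq_mul]

lemma mulVec_le_of_mem_rowStochastic (hM : M ∈ rowStochastic ℝ n) {w : n → ℝ} {i₀ : n}
    (hmax : ∀ i, w i ≤ w i₀) (i : n) : (M *ᵥ w) i ≤ w i₀ :=
  calc (M *ᵥ w) i ≤ ∑ j, M i j * w i₀ :=
        sum_le_sum fun j _ => mul_le_mul_of_nonneg_left (hmax j) (hM.1 i j)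
    _ = w i₀ := by rw [← sum_mul, sum_row_of_mem_rowStochastic hM, one_mul]

lemma nonpos_of_one_sub_smul_mulVec_nonpos (hM : M ∈ rowStochastic ℝ n) (hγ0 : 0 ≤ γ)
    (hγ1 : γ < 1) {w : n → ℝ} (hw : (1 - γ • M) *ᵥ w ≤ 0) : w ≤ 0 := by
  by_contra hpos
  obtain ⟨i, hi⟩ : ∃ i, 0 < w i := by simpa [Pi.le_def] using hpos
  obtain ⟨i₀, -, hi₀⟩ := exists_max_image univ w ⟨i, mem_univ i⟩
  have hmax : ∀ j, w j ≤ w i₀ := fun j => hi₀ j (mem_univ j)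
  have hMw := mulVec_le_of_mem_rowStochastic hM hmax i₀
  have hwi₀ : w i₀ - γ * (M *ᵥ w) i₀ ≤ 0 := one_sub_smul_mulVec_apply w i₀ ▸ hw i₀
  nlinarith [hmax i]

lemma isUnit_one_sub_smul_of_mem_rowStochastic (hM : M ∈ rowStochastic ℝ n) (hγ0 : 0 ≤ γ)
    (hγ1 : γ < 1) : IsUnit (1 - γ • M) := by
  rw [← mulVec_injective_iff_isUnit]
  intro x y hxy
  have hker : ∀ w : n → ℝ, (1 - γ • M) *ᵥ w = 0 → w ≤ 0 := fun w hw =>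
    nonpos_of_one_sub_smul_mulVec_nonpos hM hγ0 hγ1 hw.le
  have hxy' : (1 - γ • M) *ᵥ (x - y) = 0 := by rw [mulVec_sub, hxy, sub_self]
  have hyx' : (1 - γ • M) *ᵥ (y - x) = 0 := by rw [mulVec_sub, hxy, sub_self]
  exact le_antisymm (sub_nonpos.1 (hker _ hxy')) (sub_nonpos.1 (hker _ hyx'))

end InversePositivity

section ValueFunction

variable [Fintype S] [Fintype A] {P : S → A → S → ℝ} {r : S → A → S → ℝ} {γ : ℝ}
  {π : S → A → ℝ}

lemma Pmat_mem_rowStochastic [DecidableEq S]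
    (hP : ∀ s a, (∀ s', 0 ≤ P s a s') ∧ ∑ s', P s a s' = 1) (hπ : IsPolicy π) :
    Pmat P π ∈ rowStochastic ℝ S := by
  refine mem_rowStochastic_iff_sum.2 ⟨fun s s' => ?_, fun s => ?_⟩
  · exact sum_nonneg fun a _ => mul_nonneg ((hπ s).1 a) ((hP s a).1 s')
  · simp only [Pmat, of_apply]
    rw [sum_comm]
    simp only [← mul_sum, (hP s _).2, mul_one, (hπ s).2]

lemma sum_mul_adv_eq (v : S → ℝ) (s : S) (hπ : ∑ a, π s a = 1) :
    ∑ a, π s a * adv P r γ v s a = rvec P r π s + γ * (Pmat P π *ᵥ v) s - v s := by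
  simp only [adv, rvec, Pmat, mulVec, dotProduct, of_apply, mul_sub, sum_sub_distrib,
    ← sum_mul, hπ, one_mul, mul_add, sum_add_distrib, mul_sum]
  rw [sum_comm (f := fun a s' => π s a * (P s a s' * (γ * v s')))]
  congr 2
  simp only [mul_sum, sum_mul]
  exact sum_congr rfl fun s' _ => sum_congr rfl fun a _ => by ring

variable [DecidableEq S]

lemma valueFn_le_of_adv_nonpos (hP : ∀ s a, (∀ s', 0 ≤ P s a s') ∧ ∑ s', P s a s' = 1)
    (hγ0 : 0 ≤ γ) (hγ1 : γ < 1) (hπ : IsPolicy π) {v : S → ℝ}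
    (hv : ∀ s a, adv P r γ v s a ≤ 0) : valueFn P r γ π ≤ v := by
  have hM := Pmat_mem_rowStochastic hP hπ
  have hunit := (isUnit_iff_isUnit_det _).1 (isUnit_one_sub_smul_of_mem_rowStochastic hM hγ0 hγ1)
  refine sub_nonpos.1 (nonpos_of_one_sub_smul_mulVec_nonpos hM hγ0 hγ1 fun s => ?_)
  have hnonpos : ∑ a, π s a * adv P r γ v s a ≤ 0 :=
    sum_nonpos fun a _ => mul_nonpos_of_nonneg_of_nonpos ((hπ s).1 a) (hv s a)
  rw [valueFn, mulVec_sub, mulVec_mulVec, mul_nonsing_inv _ hunit, one_mulVec, Pi.sub_apply,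
    one_sub_smul_mulVec_apply, Pi.zero_apply]
  linarith [sum_mul_adv_eq (P := P) (r := r) (γ := γ) v s (hπ s).2]

lemma valueFn_eq_of_sum_mul_adv_eq_zero
    (hP : ∀ s a, (∀ s', 0 ≤ P s a s') ∧ ∑ s', P s a s' = 1) (hγ0 : 0 ≤ γ) (hγ1 : γ < 1)
    (hπ : IsPolicy π) {v : S → ℝ} (hv : ∀ s, ∑ a, π s a * adv P r γ v s a = 0) :
    valueFn P r γ π = v := by
  have hunit := (isUnit_iff_isUnit_det _).1
    (isUnit_one_sub_smul_of_mem_rowStochastic (Pmat_mem_rowStochastic hP hπ) hγ0 hγ1)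
  have hbellman : (1 - γ • Pmat P π) *ᵥ v = rvec P r π := funext fun s => by
    rw [one_sub_smul_mulVec_apply]
    linarith [sum_mul_adv_eq (P := P) (r := r) (γ := γ) v s (hπ s).2, hv s]
  rw [valueFn, ← hbellman, mulVec_mulVec, nonsing_inv_mul _ hunit, one_mulVec]

end ValueFunction

section Lagrangian

variable [Fintype S] [Fintype A] {P : S → A → S → ℝ} {r : S → A → S → ℝ} {γ : ℝ}
  {μ : S → ℝ}

/-- The coefficient of `v s` in `Lagr P r γ μ v d`: the residual at `s` of the flow constraint of
the dual (occupancy-measure) linear program. -/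
def flowDefect (P : S → A → S → ℝ) (γ : ℝ) (μ : S → ℝ) (d : S → A → ℝ) (s : S) : ℝ :=
  μ s + γ * ∑ s', ∑ a, d s' a * P s' a s - ∑ a, d s a

lemma Lagr_eq_sum_mul_flowDefect (v : S → ℝ) (d : S → A → ℝ) :
    Lagr P r γ μ v d = ∑ s, v s * flowDefect P γ μ d s
      + ∑ s, ∑ a, d s a * ∑ s', P s a s' * r s a s' := by
  have hswap : ∑ s, ∑ a, ∑ s', d s a * (P s a s' * (γ * v s'))
      = ∑ s', ∑ s, ∑ a, v s' * (γ * (d s a * P s a s')) :=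
    calc _ = ∑ s, ∑ s', ∑ a, d s a * (P s a s' * (γ * v s')) :=
          sum_congr rfl fun _ _ => sum_comm
      _ = _ := sum_comm
      _ = _ := sum_congr rfl fun _ _ => sum_congr rfl fun _ _ => sum_congr rfl fun _ _ => by ring
  simp only [Lagr, adv, flowDefect, mul_add, mul_sub, mul_sum, sum_add_distrib, sum_sub_distrib,
    hswap]
  simp only [mul_comm (v _)]
  ring

lemma flowDefect_eq_zero_of_forall_Lagr_le {v₀ : S → ℝ} {d : S → A → ℝ}
    (h : ∀ v, Lagr P r γ μ v₀ d ≤ Lagr P r γ μ v d) : flowDefect P γ μ d = 0 :=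
  eq_zero_of_forall_sum_mul_le (v₀ := v₀) fun v => by
    simpa only [Lagr_eq_sum_mul_flowDefect, add_le_add_iff_right] using h v

lemma sum_pos_of_flowDefect_eq_zero (hP : ∀ s a s', 0 ≤ P s a s') (hγ : 0 ≤ γ)
    {d : S → A → ℝ} (hd : ∀ s a, 0 ≤ d s a) {s : S} (hμ : 0 < μ s)
    (hflow : flowDefect P γ μ d s = 0) : 0 < ∑ a, d s a := by
  have hin : 0 ≤ ∑ s', ∑ a, d s' a * P s' a s :=
    sum_nonneg fun s' _ => sum_nonneg fun a _ => mul_nonneg (hd s' a) (hP s' a s)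
  rw [flowDefect] at hflow
  nlinarith [mul_nonneg hγ hin]

section

variable {v : S → ℝ} {d₀ : S → A → ℝ}

lemma forall_sum_mul_adv_le_of_forall_Lagr_le
    (h : ∀ d, (∀ s a, 0 ≤ d s a) → Lagr P r γ μ v d ≤ Lagr P r γ μ v d₀) (x : S × A → ℝ)
    (hx : 0 ≤ x) :
    ∑ p : S × A, x p * adv P r γ v p.1 p.2 ≤ ∑ p : S × A, d₀ p.1 p.2 * adv P r γ v p.1 p.2 := by
  simpa only [Lagr, Fintype.sum_prod_type, add_le_add_iff_left] using
    h (fun s a => x (s, a)) fun s a => hx (s, a)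

lemma adv_nonpos_of_forall_Lagr_le (hd₀ : ∀ s a, 0 ≤ d₀ s a)
    (h : ∀ d, (∀ s a, 0 ≤ d s a) → Lagr P r γ μ v d ≤ Lagr P r γ μ v d₀) (s : S) (a : A) :
    adv P r γ v s a ≤ 0 :=
  nonpos_of_forall_sum_mul_le (x₀ := fun p => d₀ p.1 p.2) (fun p => hd₀ p.1 p.2)
    (forall_sum_mul_adv_le_of_forall_Lagr_le h) (s, a)

lemma mul_adv_eq_zero_of_forall_Lagr_le (hd₀ : ∀ s a, 0 ≤ d₀ s a)
    (h : ∀ d, (∀ s a, 0 ≤ d s a) → Lagr P r γ μ v d ≤ Lagr P r γ μ v d₀) (s : S) (a : A) :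
    d₀ s a * adv P r γ v s a = 0 :=
  mul_eq_zero_of_forall_sum_mul_le (x₀ := fun p => d₀ p.1 p.2) (fun p => hd₀ p.1 p.2)
    (forall_sum_mul_adv_le_of_forall_Lagr_le h) (s, a)

end

end Lagrangian

lemma isPolicy_div_sum [Fintype A] {d : S → A → ℝ} (hd : ∀ s a, 0 ≤ d s a)
    (hpos : ∀ s, 0 < ∑ a, d s a) : IsPolicy fun s a => d s a / ∑ a', d s a' :=
  fun s => ⟨fun a => div_nonneg (hd s a) (hpos s).le, by rw [← sum_div, div_self (hpos s).ne']⟩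

theorem saddle_point_solves_mdp_general
    [Fintype S] [Fintype A] [DecidableEq S]
    (P : S → A → S → ℝ)
    (hP : ∀ s a, (∀ s', 0 ≤ P s a s') ∧ ∑ s', P s a s' = 1)
    (r : S → A → S → ℝ) (γ : ℝ) (hγ : 0 < γ ∧ γ < 1)
    (μ : S → ℝ) (hμpos : ∀ s, 0 < μ s)
    (vstar : S → ℝ) (dstar : S → A → ℝ) (hdnn : ∀ s a, 0 ≤ dstar s a)
    (hsaddle₁ : ∀ d : S → A → ℝ, (∀ s a, 0 ≤ d s a) →
      Lagr P r γ μ vstar d ≤ Lagr P r γ μ vstar dstar)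
    (hsaddle₂ : ∀ v : S → ℝ, Lagr P r γ μ vstar dstar ≤ Lagr P r γ μ v dstar) :
    (∑ s, μ s * vstar s = sSup {x : ℝ | ∃ π, IsPolicy π ∧ Jret P r γ μ π = x}) ∧
    (∀ s, 0 < ∑ a, dstar s a) ∧
    Jret P r γ μ (fun s a => dstar s a / ∑ a', dstar s a') =
      sSup {x : ℝ | ∃ π, IsPolicy π ∧ Jret P r γ μ π = x} := by
  obtain ⟨hγ0, hγ1⟩ := hγ
  have hflow := flowDefect_eq_zero_of_forall_Lagr_le hsaddle₂
  have hpos : ∀ s, 0 < ∑ a, dstar s a := fun s =>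
    sum_pos_of_flowDefect_eq_zero (fun s a => (hP s a).1) hγ0.le hdnn (hμpos s)
      (congrFun hflow s)
  have hπstar := isPolicy_div_sum hdnn hpos
  have hJstar : Jret P r γ μ (fun s a => dstar s a / ∑ a', dstar s a') = ∑ s, μ s * vstar s := by
    rw [Jret, valueFn_eq_of_sum_mul_adv_eq_zero hP hγ0.le hγ1 hπstar fun s => ?_]
    simp only [div_mul_eq_mul_div, mul_adv_eq_zero_of_forall_Lagr_le hdnn hsaddle₁, zero_div,
      sum_const_zero]
  have hJle : ∀ π, IsPolicy π → Jret P r γ μ π ≤ ∑ s, μ s * vstar s := fun π hπ =>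
    sum_le_sum fun s _ => mul_le_mul_of_nonneg_left
      (valueFn_le_of_adv_nonpos hP hγ0.le hγ1 hπ (adv_nonpos_of_forall_Lagr_le hdnn hsaddle₁) s)
      (hμpos s).le
  have hsup : sSup {x : ℝ | ∃ π, IsPolicy π ∧ Jret P r γ μ π = x} = ∑ s, μ s * vstar s :=
    IsGreatest.csSup_eq ⟨⟨_, hπstar, hJstar⟩, by rintro _ ⟨π, hπ, rfl⟩; exact hJle π hπ⟩
  exact ⟨hsup.symm, hpos, hJstar.trans hsup.symm⟩

/-- **Proposition 2.** A saddle point `(v*, d*)` of the MDP Lagrangian gives the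
optimal return `Σ_s μ(s) v*(s) = sup_π J(π)`, the state-marginals of `d*` are positive, and the
policy `π*(a|s) = d*(s,a)/Σ_{a'} d*(s,a')` is optimal. -/
theorem saddle_point_solves_mdp
    [Fintype S] [Fintype A] [Nonempty S] [Nonempty A] [DecidableEq S]
    (P : S → A → S → ℝ)
    (hP : ∀ s a, (∀ s', 0 ≤ P s a s') ∧ ∑ s', P s a s' = 1)
    (r : S → A → S → ℝ) (γ : ℝ) (hγ : 0 < γ ∧ γ < 1)
    (μ : S → ℝ) (hμpos : ∀ s, 0 < μ s) (hμsum : ∑ s, μ s = 1)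
    (vstar : S → ℝ) (dstar : S → A → ℝ) (hdnn : ∀ s a, 0 ≤ dstar s a)
    (hsaddle₁ : ∀ d : S → A → ℝ, (∀ s a, 0 ≤ d s a) →
      Lagr P r γ μ vstar d ≤ Lagr P r γ μ vstar dstar)
    (hsaddle₂ : ∀ v : S → ℝ, Lagr P r γ μ vstar dstar ≤ Lagr P r γ μ v dstar) :
    (∑ s, μ s * vstar s = sSup {x : ℝ | ∃ π, IsPolicy π ∧ Jret P r γ μ π = x}) ∧
    (∀ s, 0 < ∑ a, dstar s a) ∧
    Jret P r γ μ (fun s a => dstar s a / ∑ a', dstar s a') =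
      sSup {x : ℝ | ∃ π, IsPolicy π ∧ Jret P r γ μ π = x} :=
  saddle_point_solves_mdp_general P hP r γ hγ μ hμpos vstar dstar hdnn hsaddle₁ hsaddle₂
end
end

section
/- Let N, M ≥ 1 and let C be an N×N real doubly stochastic matrix with trace C > 0 that is irreducible, i.e., for every pair of indices (k,l) there exists m ≥ 1 with (C^m)(k,l) > 0. Let (Ω, 𝒢, ℙ) be a probability space with a filtration (ℱ_i)_{i∈ℕ}. For each agent k ∈ {1,…,N} let (φ_{k,i})_{i∈ℕ} be ℝ^M-valued random vectors with φ_{k,i} ℱ_i-measurable, and let (F_{k,i+1})_{i∈ℕ} be ℝ^M-valued random vectors with F_{k,i+1} ℱ_{i+1}-measurable and square-integrable. Let g_{k,i} : ℝ^M → ℝ^M satisfy ‖g_{k,i}(x) − g_{k,i}(y)‖ ≤ L₁ ‖x − y‖ for all x, y and all k, i, with sup_{k,i} ‖g_{k,i}(0)‖ < ∞, and let (α_i)_{i≥1} be positive reals with Σ_i α_i = ∞ and Σ_i α_i² < ∞. Assume for all k and i: (a) φ_{k,i+1} = Σ_{l=1}^N C(l,k) · (φ_{l,i} − α_{i+1}(g_{l,i}(φ_{l,i})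 + F_{l,i+1})); (b) E[‖F_{k,i+1}‖² | ℱ_i] ≤ L₂ (1 + ‖φ_{k,i}‖²) almost surely for a constant L₂; (c) sup_i ‖φ_{k,i}‖ < ∞ almost surely. Then for every agent k, almost surely φ_{k,i} − (1/N) Σ_{l=1}^N φ_{l,i} → 0 as i → ∞. -/
/-!
Collect the agents' iterates into `x i = (φ k i ω)ₖ` and let `center` subtract the network
average. Because `C` is doubly stochastic, the combination step `T = combineMap C` is
nonexpansive for the sup norm and commutes with `center`, so the disagreement
`ψ i = center (x i)` obeys `ψ (i + 1) = T (ψ i) - center (T (α (i + 1) • u i))`, where `u` is the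
gradient-plus-noise term. Irreducibility together with a positive diagonal entry makes some power
`C ^ m` entrywise positive, and then `T ^ m` contracts zero-sum vectors by the factor
`1 - N * min (C ^ m)`; hence `ψ → 0` whenever the perturbation `α (i + 1) • u i` tends to zero.
It does so almost surely: `α → 0` while the gradients stay bounded along the bounded iterates, and
the conditional moment bound, integrated over the events `‖φ k i‖ ≤ R`, gives
`∑ α (i + 1) ^ 2 * ‖F k (i + 1)‖ ^ 2 < ∞` almost surely.
-/

open MeasureTheory Filter

open scoped Topology

theorem tendsto_zero_of_le_mul_add {a s : ℕ → ℝ} {δ : ℝ} (hδ0 : 0 ≤ δ) (hδ1 : δ < 1)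
    (ha : ∀ j, 0 ≤ a j) (hrec : ∀ j, a (j + 1) ≤ δ * a j + s j)
    (hs : Tendsto s atTop (𝓝 0)) : Tendsto a atTop (𝓝 0) := by
  refine tendsto_order.2 ⟨fun b hb => .of_forall fun j => hb.trans_le (ha j), fun ε hε => ?_⟩
  obtain ⟨n₀, hn₀⟩ := eventually_atTop.1
    (hs.eventually (eventually_le_nhds (by positivity : 0 < (1 - δ) * (ε / 2))))
  have hbound : ∀ i, a (n₀ + i) ≤ δ ^ i * a n₀ + ε / 2 := by
    intro i
    induction i with
    | zero => simp only [add_zero, pow_zero, one_mul]; linarith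
    | succ i ih =>
      calc a (n₀ + i + 1) ≤ δ * a (n₀ + i) + s (n₀ + i) := hrec _
        _ ≤ δ * (δ ^ i * a n₀ + ε / 2) + (1 - δ) * (ε / 2) := by
          gcongr
          exact hn₀ _ (Nat.le_add_right _ _)
        _ = δ ^ (i + 1) * a n₀ + ε / 2 := by ring
  have hgeom : Tendsto (fun i => δ ^ i * a n₀ + ε / 2) atTop (𝓝 (0 * a n₀ + ε / 2)) :=
    ((tendsto_pow_atTop_nhds_zero_of_lt_one hδ0 hδ1).mul_const _).add_const _
  obtain ⟨i₁, hi₁⟩ := eventually_atTop.1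
    (hgeom.eventually (gt_mem_nhds (show 0 * a n₀ + ε / 2 < ε by linarith)))
  refine eventually_atTop.2 ⟨n₀ + i₁, fun j hj => ?_⟩
  obtain ⟨i, rfl⟩ := Nat.exists_eq_add_of_le (le_of_add_le_left hj)
  exact (hbound i).trans_lt (hi₁ i (by omega))

theorem tendsto_of_forall_tendsto_comp_mul_add {α : Type*} {f : ℕ → α} {l : Filter α} {m : ℕ}
    (hm : 0 < m) (h : ∀ r < m, Tendsto (fun j => f (j * m + r)) atTop l) :
    Tendsto f atTop l := by
  intro U hU
  have hall : ∀ᶠ j in atTop, ∀ r : Fin m, f (j * m + r) ∈ U :=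
    eventually_all.2 fun r => h r r.2 hU
  obtain ⟨J, hJ⟩ := eventually_atTop.1 hall
  refine mem_map.2 (eventually_atTop.2 ⟨J * m, fun i hi => ?_⟩)
  have := hJ (i / m) ((Nat.le_div_iff_mul_le hm).2 hi) ⟨i % m, Nat.mod_lt i hm⟩
  rwa [Nat.div_add_mod'] at this

theorem norm_sub_iterate_le {H : Type*} [SeminormedAddCommGroup H] (T : H →+ H)
    (hT : ∀ x, ‖T x‖ ≤ ‖x‖) (ψ : ℕ → H) (i j : ℕ) :
    ‖ψ (i + j) - T^[j] (ψ i)‖ ≤ ∑ t ∈ Finset.range j, ‖ψ (i + t + 1) - T (ψ (i + t))‖ := by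
  induction j with
  | zero => simp
  | succ j ih =>
    rw [Finset.sum_range_succ, Function.iterate_succ_apply', ← add_assoc]
    calc ‖ψ (i + j + 1) - T (T^[j] (ψ i))‖
        = ‖(ψ (i + j + 1) - T (ψ (i + j))) + T (ψ (i + j) - T^[j] (ψ i))‖ := by
          rw [map_sub]; abel_nf
      _ ≤ ‖ψ (i + j + 1) - T (ψ (i + j))‖ + ‖ψ (i + j) - T^[j] (ψ i)‖ :=
          (norm_add_le _ _).trans (add_le_add le_rfl (hT _))
      _ ≤ _ := by linarith

theorem tendsto_zero_of_approx_orbit {H : Type*} [SeminormedAddCommGroup H] (T : H →+ H)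
    (hT : ∀ x, ‖T x‖ ≤ ‖x‖) {m : ℕ} (hm : 0 < m) {δ : ℝ} (hδ0 : 0 ≤ δ) (hδ1 : δ < 1)
    {ψ : ℕ → H} (hcontr : ∀ i, ‖T^[m] (ψ i)‖ ≤ δ * ‖ψ i‖)
    (hstep : Tendsto (fun i => ψ (i + 1) - T (ψ i)) atTop (𝓝 0)) :
    Tendsto ψ atTop (𝓝 0) := by
  set s : ℕ → ℝ := fun i => ∑ t ∈ Finset.range m, ‖ψ (i + t + 1) - T (ψ (i + t))‖
  have hs : Tendsto s atTop (𝓝 0) := by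
    simpa using tendsto_finsetSum (Finset.range m) fun t _ =>
      hstep.norm.comp (tendsto_add_atTop_nat t)
  have hrec : ∀ i, ‖ψ (i + m)‖ ≤ δ * ‖ψ i‖ + s i := fun i =>
    calc ‖ψ (i + m)‖ ≤ ‖T^[m] (ψ i)‖ + ‖ψ (i + m) - T^[m] (ψ i)‖ := norm_le_insert' _ _
      _ ≤ δ * ‖ψ i‖ + s i := add_le_add (hcontr i) (norm_sub_iterate_le T hT ψ i m)
  refine tendsto_zero_iff_norm_tendsto_zero.2
    (tendsto_of_forall_tendsto_comp_mul_add hm fun r _ => ?_)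
  refine tendsto_zero_of_le_mul_add (s := fun j => s (j * m + r)) hδ0 hδ1
    (fun _ => norm_nonneg _) (fun j => ?_) (hs.comp (tendsto_atTop_mono (fun j => ?_) tendsto_id))
  · simpa [add_mul, add_right_comm] using hrec (j * m + r)
  · exact (Nat.le_mul_of_pos_right j hm).trans (Nat.le_add_right _ _)

theorem tendsto_zero_of_summable_sq_norm {E : Type*} [SeminormedAddGroup E] {v : ℕ → E}
    (h : Summable fun i => ‖v i‖ ^ 2) : Tendsto v atTop (𝓝 0) := by
  refine tendsto_zero_iff_norm_tendsto_zero.2 ?_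
  simpa [Real.sqrt_sq (norm_nonneg _)] using h.tendsto_atTop_zero.sqrt

theorem isBoundedUnder_norm_apply_of_lipschitz {ι E F : Type*} [SeminormedAddCommGroup E]
    [SeminormedAddCommGroup F] {l : Filter ι} {f : ι → E → F} {L B : ℝ}
    (hf : ∀ i x y, ‖f i x - f i y‖ ≤ L * ‖x - y‖) (hf0 : ∀ i, ‖f i 0‖ ≤ B) {x : ι → E}
    (hx : ∃ B', ∀ i, ‖x i‖ ≤ B') : IsBoundedUnder (· ≤ ·) l fun i => ‖f i (x i)‖ := by
  obtain ⟨B', hB'⟩ := hx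
  refine isBoundedUnder_of ⟨B + |L| * B', fun i => ?_⟩
  calc ‖f i (x i)‖ ≤ ‖f i 0‖ + ‖f i (x i) - f i 0‖ := norm_le_insert' _ _
    _ ≤ B + L * ‖x i‖ := add_le_add (hf0 i) (by simpa using hf i (x i) 0)
    _ ≤ B + |L| * B' := add_le_add le_rfl <|
      (mul_le_mul_of_nonneg_right (le_abs_self L) (norm_nonneg _)).trans
        (mul_le_mul_of_nonneg_left (hB' i) (abs_nonneg L))

namespace Matrix

variable {n R : Type*} [Fintype n] [DecidableEq n] [Ring R] [LinearOrder R] [IsStrictOrderedRing R]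
  {A : Matrix n n R}

theorem pow_add_apply_pos (hA : ∀ i j, 0 ≤ A i j) {a b : ℕ} {i j k : n}
    (hij : 0 < (A ^ a) i j) (hjk : 0 < (A ^ b) j k) : 0 < (A ^ (a + b)) i k := by
  rw [pow_add, mul_apply]
  exact Finset.sum_pos'
    (fun l _ => mul_nonneg (pow_apply_nonneg hA a i l) (pow_apply_nonneg hA b l k))
    ⟨j, Finset.mem_univ j, mul_pos hij hjk⟩

/-- Aperiodicity from a self-loop: with `A d d > 0`, a path from `i` to `d` and one from `d` to
`j` can be joined through any number of turns around the loop. -/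
theorem IsIrreducible.isPrimitive_of_trace_pos (hA : A.IsIrreducible) (htr : 0 < A.trace) :
    A.IsPrimitive := by
  obtain ⟨d, -, hd⟩ :=
    Finset.exists_lt_of_sum_lt (f := fun _ => (0 : R)) (by simpa [trace] using htr)
  have hloop : ∀ t, 0 < (A ^ t) d d := by
    intro t
    induction t with
    | zero => simp
    | succ t ih => exact pow_add_apply_pos hA.nonneg ih (by simpa using hd)
  have hconn := (isIrreducible_iff_exists_pow_pos hA.nonneg).1 hA
  choose a ha hid using fun i => hconn i d
  choose b hb hdj using fun j => hconn d j
  have hai i : a i ≤ ∑ i, a i :=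
    Finset.single_le_sum (fun _ _ => Nat.zero_le _) (Finset.mem_univ i)
  have hbj j : b j ≤ ∑ j, b j :=
    Finset.single_le_sum (fun _ _ => Nat.zero_le _) (Finset.mem_univ j)
  refine ⟨hA.nonneg, ∑ i, a i + ∑ j, b j, (ha d).trans_le ((hai d).trans le_self_add),
    fun i j => ?_⟩
  have hsplit : ∑ i, a i + ∑ j, b j = a i + (∑ i, a i - a i + (∑ j, b j - b j)) + b j := by
    have := hai i; have := hbj j; omega
  rw [hsplit]
  exact pow_add_apply_pos hA.nonneg (pow_add_apply_pos hA.nonneg (hid i) (hloop _)) (hdj j)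

end Matrix

section Network

variable {ι E : Type*} [Fintype ι] [NormedAddCommGroup E] [NormedSpace ℝ E]

def combineMap (D : Matrix ι ι ℝ) : (ι → E) →ₗ[ℝ] (ι → E) where
  toFun x k := ∑ l, D l k • x l
  map_add' x y := by ext k; simp [smul_add, Finset.sum_add_distrib]
  map_smul' c x := by ext k; simp [Finset.smul_sum, smul_comm c]

@[simp]
theorem combineMap_apply (D : Matrix ι ι ℝ) (x : ι → E) (k : ι) :
    combineMap D x k = ∑ l, D l k • x l := rfl

theorem combineMap_mul (A B : Matrix ι ι ℝ) (x : ι → E) :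
    combineMap (A * B) x = combineMap B (combineMap A x) := by
  ext k
  simp only [combineMap_apply, Matrix.mul_apply, Finset.sum_smul, Finset.smul_sum, smul_smul]
  rw [Finset.sum_comm]
  simp_rw [mul_comm]

theorem combineMap_pow [DecidableEq ι] (D : Matrix ι ι ℝ) (m : ℕ) :
    ⇑(combineMap (E := E) (D ^ m)) = (combineMap D)^[m] := by
  induction m with
  | zero => ext x k; simp [Matrix.one_apply]
  | succ m ih =>
    ext x k
    rw [pow_succ, combineMap_mul, ih, Function.iterate_succ_apply']

theorem norm_combineMap_le {D : Matrix ι ι ℝ} (hD : ∀ l k, 0 ≤ D l k) {s : ℝ} (hs : 0 ≤ s)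
    (hcol : ∀ k, ∑ l, D l k ≤ s) (x : ι → E) : ‖combineMap D x‖ ≤ s * ‖x‖ := by
  refine (pi_norm_le_iff_of_nonneg (by positivity)).2 fun k => ?_
  calc ‖∑ l, D l k • x l‖ ≤ ∑ l, D l k * ‖x‖ := by
        refine (norm_sum_le _ _).trans (Finset.sum_le_sum fun l _ => ?_)
        rw [norm_smul, Real.norm_of_nonneg (hD l k)]
        exact mul_le_mul_of_nonneg_left (norm_le_pi_norm x l) (hD l k)
    _ ≤ s * ‖x‖ := by
        rw [← Finset.sum_mul]
        exact mul_le_mul_of_nonneg_right (hcol k) (norm_nonneg x)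

/-- On zero-sum vectors the part `c` common to all weights contributes nothing. -/
theorem norm_combineMap_le_of_sum_eq_zero {D : Matrix ι ι ℝ} {c : ℝ} (hc : ∀ l k, c ≤ D l k)
    (hcol : ∀ k, ∑ l, D l k = 1) (hδ : 0 ≤ 1 - Fintype.card ι * c) {x : ι → E}
    (hx : ∑ k, x k = 0) : ‖combineMap D x‖ ≤ (1 - Fintype.card ι * c) * ‖x‖ := by
  have hshift : combineMap D x = combineMap (D - Matrix.of fun _ _ => c) x := by
    ext k
    simp [sub_smul, Finset.sum_sub_distrib, ← Finset.smul_sum, hx]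
  rw [hshift]
  refine norm_combineMap_le (fun l k => by simpa using hc l k) hδ (fun k => ?_) x
  simp [Finset.sum_sub_distrib, hcol]

noncomputable def center : (ι → E) →ₗ[ℝ] (ι → E) :=
  LinearMap.id - combineMap (Matrix.of fun _ _ => (Fintype.card ι : ℝ)⁻¹)

theorem center_apply (x : ι → E) (k : ι) :
    center x k = x k - (Fintype.card ι : ℝ)⁻¹ • ∑ l, x l := by
  simp [center, Finset.smul_sum]

theorem sum_center (x : ι → E) : ∑ k, center x k = 0 := by
  rcases isEmpty_or_nonempty ι with hι | hι
  · simp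
  simp [center_apply, Finset.sum_sub_distrib, ← Nat.cast_smul_eq_nsmul ℝ, smul_smul]

theorem norm_center_le (x : ι → E) : ‖center x‖ ≤ 2 * ‖x‖ :=
  calc ‖center x‖ ≤ ‖x‖ + ‖combineMap (Matrix.of fun _ _ => (Fintype.card ι : ℝ)⁻¹) x‖ :=
        norm_sub_le _ _
    _ ≤ ‖x‖ + 1 * ‖x‖ := add_le_add le_rfl <| norm_combineMap_le
        (fun _ _ => inv_nonneg.2 (Nat.cast_nonneg _)) zero_le_one
        (fun _ => by simp [mul_inv_le_one]) x
    _ = 2 * ‖x‖ := by ring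

theorem combineMap_center {D : Matrix ι ι ℝ} (hrow : ∀ l, ∑ k, D l k = 1)
    (hcol : ∀ k, ∑ l, D l k = 1) (x : ι → E) :
    combineMap D (center x) = center (combineMap D x) := by
  ext k
  simp only [center_apply, combineMap_apply, smul_sub, Finset.sum_sub_distrib, ← Finset.sum_smul,
    hcol, one_smul]
  congr 2
  rw [Finset.sum_comm]
  simp [← Finset.sum_smul, hrow]

theorem norm_combineMap_le_norm [DecidableEq ι] {C : Matrix ι ι ℝ}
    (hC : C ∈ doublyStochastic ℝ ι) (x : ι → E) : ‖combineMap C x‖ ≤ ‖x‖ := by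
  simpa using norm_combineMap_le (fun _ _ => nonneg_of_mem_doublyStochastic hC) zero_le_one
    (fun k => (sum_col_of_mem_doublyStochastic hC k).le) x

theorem exists_norm_combineMap_le_of_pos [DecidableEq ι] [Nonempty ι] {D : Matrix ι ι ℝ}
    (hD : D ∈ doublyStochastic ℝ ι) (hpos : ∀ l k, 0 < D l k) :
    ∃ δ, 0 ≤ δ ∧ δ < 1 ∧ ∀ x : ι → E, ∑ k, x k = 0 → ‖combineMap D x‖ ≤ δ * ‖x‖ := by
  obtain ⟨⟨l₀, k₀⟩, hmin⟩ := Finite.exists_min fun p : ι × ι => D p.1 p.2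
  have hcol := sum_col_of_mem_doublyStochastic hD
  have hδ0 : 0 ≤ 1 - Fintype.card ι * D l₀ k₀ := by
    have := Finset.sum_le_sum fun l (_ : l ∈ Finset.univ) => hmin (l, k₀)
    simp only [Finset.sum_const, Finset.card_univ, nsmul_eq_mul, hcol] at this
    linarith
  have hδ1 : 1 - Fintype.card ι * D l₀ k₀ < 1 := by
    have := mul_pos (Nat.cast_pos.2 (Fintype.card_pos (α := ι))) (hpos l₀ k₀)
    linarith
  exact ⟨_, hδ0, hδ1, fun x hx =>
    norm_combineMap_le_of_sum_eq_zero (fun l k => hmin (l, k)) hcol hδ0 hx⟩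

theorem tendsto_center_of_combineMap [DecidableEq ι] [Nonempty ι] {C : Matrix ι ι ℝ}
    (hC : C ∈ doublyStochastic ℝ ι) (hprim : C.IsPrimitive) {x v : ℕ → ι → E}
    (hx : ∀ i, x (i + 1) = combineMap C (x i - v i)) (hv : Tendsto v atTop (𝓝 0)) :
    Tendsto (fun i => center (x i)) atTop (𝓝 0) := by
  obtain ⟨-, m, hm, hpos⟩ := hprim
  obtain ⟨δ, hδ0, hδ1, hcontr⟩ :=
    exists_norm_combineMap_le_of_pos (E := E) (pow_mem hC m) hpos
  obtain ⟨-, hrow, hcol⟩ := mem_doublyStochastic_iff_sum.1 hC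
  refine tendsto_zero_of_approx_orbit (combineMap C).toAddMonoidHom (norm_combineMap_le_norm hC)
    hm hδ0 hδ1 (fun i => ?_) (squeeze_zero_norm (fun i => ?_) (by simpa using hv.norm.const_mul 2))
  · simpa [← combineMap_pow] using hcontr _ (sum_center (x i))
  · have hdiff : center (x (i + 1)) - combineMap C (center (x i))
        = -center (combineMap C (v i)) := by
      rw [hx, map_sub, map_sub, combineMap_center hrow hcol, sub_sub_cancel_left]
    rw [LinearMap.toAddMonoidHom_coe, hdiff, norm_neg]
    exact (norm_center_le _).trans (by gcongr; exact norm_combineMap_le_norm hC _)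

end Network

section Probability

variable {Ω : Type*} {mΩ : MeasurableSpace Ω} {μ : Measure Ω}

theorem ae_summable_norm_of_summable_integral_norm {E : Type*} [NormedAddCommGroup E]
    {f : ℕ → Ω → E} (hf : ∀ n, Integrable (f n) μ) (h : Summable fun n => ∫ ω, ‖f n ω‖ ∂μ) :
    ∀ᵐ ω ∂μ, Summable fun n => ‖f n ω‖ := by
  refine summable_norm_of_tsum_eLpNorm_ne_top le_rfl (fun n => (hf n).aestronglyMeasurable) ?_
  simp_rw [eLpNorm_one_eq_lintegral_enorm, ← ofReal_integral_norm_eq_lintegral_enorm (hf _)]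
  rw [← ENNReal.ofReal_tsum_of_nonneg (fun n => integral_nonneg fun _ => norm_nonneg _) h]
  exact ENNReal.ofReal_ne_top

theorem setIntegral_le_of_ae_condExp_le [IsProbabilityMeasure μ] {m : MeasurableSpace Ω}
    (hm : m ≤ mΩ) {f : Ω → ℝ} (hf : Integrable f μ) {s : Set Ω} (hs : MeasurableSet[m] s)
    {c : ℝ} (hc0 : 0 ≤ c) (hc : ∀ᵐ ω ∂μ, ω ∈ s → μ[f|m] ω ≤ c) : ∫ ω in s, f ω ∂μ ≤ c := by
  rw [← setIntegral_condExp hm hf hs]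
  calc ∫ ω in s, μ[f|m] ω ∂μ ≤ ∫ _ in s, c ∂μ :=
        setIntegral_mono_ae_restrict integrable_condExp.integrableOn integrableOn_const
          ((ae_restrict_iff' (hm s hs)).2 hc)
    _ = μ.real s * c := setIntegral_const c
    _ ≤ c := mul_le_of_le_one_left hc0 measureReal_le_one

/-- The bound on `Y` is random, so the moment bound is integrated over the `ℱ i`-measurable
events `‖Y i‖ ≤ R`; on each of them `β i • Z i` is square-summable almost surely. -/
theorem ae_tendsto_smul_of_condExp_sq_norm_le [IsProbabilityMeasure μ] {E F : Type*}
    [NormedAddCommGroup E] [NormedSpace ℝ E] [NormedAddCommGroup F] {ℱ : Filtration ℕ mΩ}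
    {Y : ℕ → Ω → F} {Z : ℕ → Ω → E} (hY : ∀ i, StronglyMeasurable[ℱ i] (Y i))
    (hZ : ∀ i, MemLp (Z i) 2 μ) {β : ℕ → ℝ} (hβ : Summable fun i => β i ^ 2) {L : ℝ}
    (hcond : ∀ i, ∀ᵐ ω ∂μ, μ[fun ω' => ‖Z i ω'‖ ^ 2|ℱ i] ω ≤ L * (1 + ‖Y i ω‖ ^ 2))
    (hbdd : ∀ᵐ ω ∂μ, ∃ B, ∀ i, ‖Y i ω‖ ≤ B) :
    ∀ᵐ ω ∂μ, Tendsto (fun i => β i • Z i ω) atTop (𝓝 0) := by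
  set A : ℕ → ℕ → Set Ω := fun R i => {ω | ‖Y i ω‖ ≤ R}
  have hA : ∀ R i, MeasurableSet[ℱ i] (A R i) := fun R i =>
    (hY i).norm.measurable measurableSet_Iic
  have hint : ∀ i, Integrable (fun ω => ‖Z i ω‖ ^ 2) μ := fun i =>
    (hZ i).integrable_norm_pow two_ne_zero
  have htrunc : ∀ R : ℕ, ∀ᵐ ω ∂μ,
      Summable fun i => ‖(A R i).indicator (fun ω => β i ^ 2 * ‖Z i ω‖ ^ 2) ω‖ := by
    intro R
    refine ae_summable_norm_of_summable_integral_norm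
      (fun i => ((hint i).const_mul _).indicator (ℱ.le i _ (hA R i)))
      (.of_nonneg_of_le (fun i => integral_nonneg fun _ => norm_nonneg _) (fun i => ?_)
        (hβ.mul_right (|L| * (1 + R ^ 2))))
    have hmoment : ∫ ω in A R i, ‖Z i ω‖ ^ 2 ∂μ ≤ |L| * (1 + R ^ 2) := by
      refine setIntegral_le_of_ae_condExp_le (ℱ.le i) (hint i) (hA R i) (by positivity) ?_
      filter_upwards [hcond i] with ω hω (hωR : ‖Y i ω‖ ≤ R)
      calc _ ≤ L * (1 + ‖Y i ω‖ ^ 2) := hω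
        _ ≤ |L| * (1 + ‖Y i ω‖ ^ 2) := by gcongr; exact le_abs_self L
        _ ≤ |L| * (1 + R ^ 2) := by gcongr
    calc ∫ ω, ‖(A R i).indicator (fun ω => β i ^ 2 * ‖Z i ω‖ ^ 2) ω‖ ∂μ
        = β i ^ 2 * ∫ ω in A R i, ‖Z i ω‖ ^ 2 ∂μ := by
          simp_rw [norm_indicator_eq_indicator_norm, norm_mul, norm_pow, norm_norm,
            Real.norm_eq_abs, sq_abs]
          rw [integral_indicator (ℱ.le i _ (hA R i)), integral_const_mul]
      _ ≤ β i ^ 2 * (|L| * (1 + R ^ 2)) := by gcongr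
  filter_upwards [ae_all_iff.2 htrunc, hbdd] with ω hω ⟨B, hB⟩
  refine tendsto_zero_of_summable_sq_norm ((hω ⌈B⌉₊).congr fun i => ?_)
  have hωA : ω ∈ A ⌈B⌉₊ i := (hB i).trans (Nat.le_ceil B)
  rw [Set.indicator_of_mem hωA, Real.norm_of_nonneg (by positivity), norm_smul, mul_pow,
    Real.norm_eq_abs, sq_abs]

end Probability

theorem diffusion_asymptotic_agreement_general
    (N M : ℕ)
    (C : Matrix (Fin N) (Fin N) ℝ)
    (hCnn : ∀ l k, 0 ≤ C l k)
    (hCrow : ∀ l, ∑ k, C l k = 1)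
    (hCcol : ∀ k, ∑ l, C l k = 1)
    (hCtr : 0 < C.trace)
    (hCirr : ∀ k l, ∃ m, 1 ≤ m ∧ 0 < (C ^ m) k l)
    {Ω : Type*} {mΩ : MeasurableSpace Ω} (ℙ : Measure Ω) [IsProbabilityMeasure ℙ]
    (ℱ : Filtration ℕ mΩ)
    (φ : Fin N → ℕ → Ω → EuclideanSpace ℝ (Fin M))
    (hφmeas : ∀ k i, StronglyMeasurable[ℱ i] (φ k i))
    (F : Fin N → ℕ → Ω → EuclideanSpace ℝ (Fin M))
    (hFsq : ∀ k i, MemLp (F k (i + 1)) 2 ℙ)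
    (g : Fin N → ℕ → EuclideanSpace ℝ (Fin M) → EuclideanSpace ℝ (Fin M))
    (L₁ : ℝ) (hgLip : ∀ k i x y, ‖g k i x - g k i y‖ ≤ L₁ * ‖x - y‖)
    (hg0 : ∃ B : ℝ, ∀ k i, ‖g k i 0‖ ≤ B)
    (α : ℕ → ℝ)
    (hαsq : Summable fun i => (α i) ^ 2)
    (hrec : ∀ k i ω, φ k (i + 1) ω =
      ∑ l, C l k • (φ l i ω - α (i + 1) • (g l i (φ l i ω) + F l (i + 1) ω)))
    (L₂ : ℝ)
    (hFcond : ∀ k i, ∀ᵐ ω ∂ℙ,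
      (ℙ[fun ω' => ‖F k (i + 1) ω'‖ ^ 2|ℱ i]) ω ≤ L₂ * (1 + ‖φ k i ω‖ ^ 2))
    (hbdd : ∀ k, ∀ᵐ ω ∂ℙ, ∃ B : ℝ, ∀ i, ‖φ k i ω‖ ≤ B) :
    ∀ k, ∀ᵐ ω ∂ℙ,
      Tendsto (fun i => φ k i ω - (N : ℝ)⁻¹ • ∑ l, φ l i ω) atTop (nhds 0) := by
  intro k
  have : Nonempty (Fin N) := ⟨k⟩
  have hC : C ∈ doublyStochastic ℝ (Fin N) :=
    mem_doublyStochastic_iff_sum.2 ⟨hCnn, hCrow, hCcol⟩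
  have hprim : C.IsPrimitive :=
    ((Matrix.isIrreducible_iff_exists_pow_pos hCnn).2 hCirr).isPrimitive_of_trace_pos hCtr
  have hαsq' : Summable fun i => α (i + 1) ^ 2 := (summable_nat_add_iff 1).2 hαsq
  have hα : Tendsto (fun i => α (i + 1)) atTop (𝓝 0) :=
    tendsto_zero_of_summable_sq_norm (by simpa using hαsq')
  have hnoise : ∀ l, ∀ᵐ ω ∂ℙ, Tendsto (fun i => α (i + 1) • F l (i + 1) ω) atTop (𝓝 0) :=
    fun l => ae_tendsto_smul_of_condExp_sq_norm_le (Z := fun i => F l (i + 1))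
      (hφmeas l) (hFsq l) hαsq' (hFcond l) (hbdd l)
  obtain ⟨B, hB⟩ := hg0
  filter_upwards [ae_all_iff.2 hnoise, ae_all_iff.2 hbdd] with ω hFω hφω
  have hv : Tendsto (fun i l => α (i + 1) • (g l i (φ l i ω) + F l (i + 1) ω)) atTop (𝓝 0) :=
    tendsto_pi_nhds.2 fun l => by
      simpa [smul_add] using (NormedField.tendsto_zero_smul_of_tendsto_zero_of_bounded hα
        (isBoundedUnder_norm_apply_of_lipschitz (hgLip l) (hB l) (hφω l))).add (hFω l)
  have hψ := tendsto_center_of_combineMap hC hprim (x := fun i l => φ l i ω)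
    (fun i => funext fun k => hrec k i ω) hv
  simpa [center_apply] using tendsto_pi_nhds.1 hψ k

/-- **Theorem 2, asymptotic agreement.** Under the network connectivity
assumptions, Lipschitz gradients, square-summable step sizes, conditionally square-integrable
noise, and almost surely bounded iterates, every agent's parameter vector in the diffusion
adaptation–combination recursion converges almost surely to the network average. -/
theorem diffusion_asymptotic_agreement
    (N M : ℕ) (hN : 1 ≤ N) (hM : 1 ≤ M)
    (C : Matrix (Fin N) (Fin N) ℝ)
    (hCnn : ∀ l k, 0 ≤ C l k)
    (hCrow : ∀ l, ∑ k, C l k = 1)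
    (hCcol : ∀ k, ∑ l, C l k = 1)
    (hCtr : 0 < C.trace)
    (hCirr : ∀ k l, ∃ m, 1 ≤ m ∧ 0 < (C ^ m) k l)
    {Ω : Type*} {mΩ : MeasurableSpace Ω} (ℙ : Measure Ω) [IsProbabilityMeasure ℙ]
    (ℱ : Filtration ℕ mΩ)
    (φ : Fin N → ℕ → Ω → EuclideanSpace ℝ (Fin M))
    (hφmeas : ∀ k i, StronglyMeasurable[ℱ i] (φ k i))
    (F : Fin N → ℕ → Ω → EuclideanSpace ℝ (Fin M))
    (hFmeas : ∀ k i, StronglyMeasurable[ℱ (i + 1)] (F k (i + 1)))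
    (hFsq : ∀ k i, MemLp (F k (i + 1)) 2 ℙ)
    (g : Fin N → ℕ → EuclideanSpace ℝ (Fin M) → EuclideanSpace ℝ (Fin M))
    (L₁ : ℝ) (hgLip : ∀ k i x y, ‖g k i x - g k i y‖ ≤ L₁ * ‖x - y‖)
    (hg0 : ∃ B : ℝ, ∀ k i, ‖g k i 0‖ ≤ B)
    (α : ℕ → ℝ) (hαpos : ∀ i, 1 ≤ i → 0 < α i)
    (hαdiv : Tendsto (fun n => ∑ i ∈ Finset.range n, α i) atTop atTop)
    (hαsq : Summable fun i => (α i) ^ 2)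
    (hrec : ∀ k i ω, φ k (i + 1) ω =
      ∑ l, C l k • (φ l i ω - α (i + 1) • (g l i (φ l i ω) + F l (i + 1) ω)))
    (L₂ : ℝ)
    (hFcond : ∀ k i, ∀ᵐ ω ∂ℙ,
      (ℙ[fun ω' => ‖F k (i + 1) ω'‖ ^ 2|ℱ i]) ω ≤ L₂ * (1 + ‖φ k i ω‖ ^ 2))
    (hbdd : ∀ k, ∀ᵐ ω ∂ℙ, ∃ B : ℝ, ∀ i, ‖φ k i ω‖ ≤ B) :
    ∀ k, ∀ᵐ ω ∂ℙ,
      Tendsto (fun i => φ k i ω - (N : ℝ)⁻¹ • ∑ l, φ l i ω) atTop (nhds 0) :=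
  diffusion_asymptotic_agreement_general N M C hCnn hCrow hCcol hCtr hCirr ℙ ℱ φ hφmeas F hFsq g L₁
    hgLip hg0 α hαsq hrec L₂ hFcond hbdd
end

section
/- Let C be an N×N real doubly stochastic primitive matrix (N ≥ 1) and let J denote the N×N all-ones matrix. Then every eigenvalue λ ∈ ℂ of the matrix C − (1/N)·J (viewed as a complex matrix) satisfies |λ| < 1. -/
/-- The `N × N` all-ones matrix. -/
def onesMatrix (N : ℕ) : Matrix (Fin N) (Fin N) ℝ :=
  Matrix.of fun _ _ => 1

/-!
Let `λ ≠ 0` be an eigenvalue of `C - (1/N)·J` with eigenvector `v`. The columns of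
`C - (1/N)·J` sum to zero, which forces `∑ v = 0`; on such vectors `J` vanishes, so `v` is an
eigenvector of `C` for `λ` and of the positive, row-stochastic `A = C^m` for `λ^m`. On zero-sum
vectors `A` acts as `A - ε·J`, where `ε > 0` is its least entry, and the rows of `A - ε·J` are
nonnegative with sum `1 - Nε`; so `A` contracts the sup norm of `v` by `1 - Nε < 1`, whence
`|λ|^m < 1`.
-/

open Finset Matrix

namespace Matrix

variable {n : Type*} [Fintype n]

lemma exists_mulVec_eq_smul_of_mem_spectrum {K : Type*} [Field K] [DecidableEq n]
    {A : Matrix n n K} {μ : K} (h : μ ∈ spectrum K A) : ∃ v ≠ 0, A *ᵥ v = μ • v := by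
  rw [← spectrum_toLin', ← Module.End.hasEigenvalue_iff_mem_spectrum] at h
  obtain ⟨v, hv⟩ := h.exists_hasEigenvector
  exact ⟨v, hv.2, by simpa using hv.apply_eq_smul⟩

lemma sum_eq_zero_of_mulVec_eq_smul {K : Type*} [Field K] {B : Matrix n n K}
    (hB : ∀ k, ∑ i, B i k = 0) {v : n → K} {μ : K} (hμ : μ ≠ 0) (hv : B *ᵥ v = μ • v) :
    ∑ i, v i = 0 := by
  have hB' : 1 ᵥ* B = 0 := funext fun k => by simpa [vecMul, dotProduct] using hB k
  have : μ * ∑ i, v i = 0 :=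
    calc μ * ∑ i, v i = 1 ⬝ᵥ (B *ᵥ v) := by simp [hv, one_dotProduct, mul_sum]
      _ = 0 := by rw [dotProduct_mulVec, hB', zero_dotProduct]
  exact (mul_eq_zero.1 this).resolve_left hμ

lemma sum_eq_zero_and_mulVec_eq_smul_of_sub_averaging {K : Type*} [Field K] [CharZero K]
    {C : Matrix n n K} (hC : ∀ k, ∑ i, C i k = 1) {v : n → K} {μ : K} (hμ : μ ≠ 0)
    (hv : (C - (Fintype.card n : K)⁻¹ • of fun _ _ => 1) *ᵥ v = μ • v) :
    ∑ i, v i = 0 ∧ C *ᵥ v = μ • v := by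
  have hsum : ∑ i, v i = 0 := by
    refine sum_eq_zero_of_mulVec_eq_smul (fun k => ?_) hμ hv
    have : Nonempty n := ⟨k⟩
    have : (Fintype.card n : K) ≠ 0 := Nat.cast_ne_zero.2 Fintype.card_ne_zero
    simp [sum_sub_distrib, hC k, this]
  refine ⟨hsum, ?_⟩
  rw [← hv, sub_mulVec, smul_mulVec, eq_sub_iff_add_eq, add_eq_left, smul_eq_zero]
  exact Or.inr (funext fun _ => by simp [mulVec, dotProduct, hsum])

lemma sum_pow_apply_eq_one {R : Type*} [Semiring R] [DecidableEq n] {C : Matrix n n R}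
    (hC : ∀ i, ∑ k, C i k = 1) (m : ℕ) (i : n) : ∑ k, (C ^ m) i k = 1 := by
  have hC' : C *ᵥ 1 = 1 := funext fun i => by simpa [mulVec, dotProduct] using hC i
  have : (C ^ m) *ᵥ 1 = 1 := by
    induction m with
    | zero => simp
    | succ m ih => rw [pow_succ, ← mulVec_mulVec, hC', ih]
  simpa [mulVec, dotProduct] using congrFun this i

lemma pow_mulVec_eq_smul {R : Type*} [CommSemiring R] [DecidableEq n] {A : Matrix n n R}
    {v : n → R} {μ : R} (h : A *ᵥ v = μ • v) (m : ℕ) : (A ^ m) *ᵥ v = μ ^ m • v := by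
  induction m with
  | zero => simp
  | succ m ih => rw [pow_succ', ← mulVec_mulVec, ih, mulVec_smul, h, smul_smul, pow_succ]

lemma norm_mulVec_le_of_sum_eq_zero [Nonempty n] {A : Matrix n n ℝ} {ε : ℝ}
    (hε : ∀ i k, ε ≤ A i k) (hA : ∀ i, ∑ k, A i k = 1) {v : n → ℂ} (hv : ∑ k, v k = 0) :
    ‖A.map ((↑) : ℝ → ℂ) *ᵥ v‖ ≤ (1 - Fintype.card n * ε) * ‖v‖ := by
  refine (pi_norm_le_iff_of_nonempty _).2 fun i => ?_
  calc ‖(A.map ((↑) : ℝ → ℂ) *ᵥ v) i‖ = ‖∑ k, ((A i k - ε : ℝ) : ℂ) * v k‖ := by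
        simp [mulVec, dotProduct, sub_mul, sum_sub_distrib, ← mul_sum, hv]
    _ ≤ ∑ k, (A i k - ε) * ‖v k‖ := by
        refine (norm_sum_le _ _).trans_eq (sum_congr rfl fun k _ => ?_)
        rw [norm_mul, Complex.norm_real, Real.norm_of_nonneg (sub_nonneg.2 (hε i k))]
    _ ≤ ∑ k, (A i k - ε) * ‖v‖ :=
        sum_le_sum fun k _ =>
          mul_le_mul_of_nonneg_left (norm_le_pi_norm v k) (sub_nonneg.2 (hε i k))
    _ = (1 - Fintype.card n * ε) * ‖v‖ := by
        simp [← sum_mul, sum_sub_distrib, hA i]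

lemma exists_norm_mulVec_le_of_pos [Nonempty n] {A : Matrix n n ℝ} (hpos : ∀ i k, 0 < A i k)
    (hA : ∀ i, ∑ k, A i k = 1) :
    ∃ c < 1, ∀ v : n → ℂ, ∑ k, v k = 0 → ‖A.map ((↑) : ℝ → ℂ) *ᵥ v‖ ≤ c * ‖v‖ := by
  obtain ⟨⟨i₀, k₀⟩, hmin⟩ := Finite.exists_min fun p : n × n => A p.1 p.2
  refine ⟨1 - Fintype.card n * A i₀ k₀, ?_, fun v hv => norm_mulVec_le_of_sum_eq_zero
    (fun i k => hmin (i, k)) hA hv⟩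
  have := hpos i₀ k₀
  have : (0 : ℝ) < Fintype.card n := by positivity
  nlinarith

end Matrix

theorem disagreement_matrix_spectral_radius_lt_one_general
    (N : ℕ) (C : Matrix (Fin N) (Fin N) ℝ)
    (hCrow : ∀ l, ∑ k, C l k = 1)
    (hCcol : ∀ k, ∑ l, C l k = 1)
    (hPrim : ∃ m, 1 ≤ m ∧ ∀ k l, 0 < (C ^ m) k l)
    (lam : ℂ)
    (hlam : lam ∈ spectrum ℂ ((C - (N : ℝ)⁻¹ • onesMatrix N).map (Complex.ofReal ·))) :
    ‖lam‖ < 1 := by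
  obtain ⟨v, hv0, hv⟩ := exists_mulVec_eq_smul_of_mem_spectrum hlam
  rcases eq_or_ne lam 0 with rfl | hlam0
  · simp
  have hdisagreement : (C - (N : ℝ)⁻¹ • onesMatrix N).map (Complex.ofReal ·) =
      C.map (↑) - (Fintype.card (Fin N) : ℂ)⁻¹ • of fun _ _ => 1 := by
    ext; simp [onesMatrix]
  obtain ⟨hsum, hCv⟩ := sum_eq_zero_and_mulVec_eq_smul_of_sub_averaging
    (C := C.map (↑)) (fun k => by simp [← Complex.ofReal_sum, hCcol k]) hlam0
    (hdisagreement ▸ hv)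
  obtain ⟨m, hm, hpos⟩ := hPrim
  have : Nonempty (Fin N) := ⟨(Function.ne_iff.1 hv0).choose⟩
  obtain ⟨c, hc, hcontract⟩ := exists_norm_mulVec_le_of_pos hpos (sum_pow_apply_eq_one hCrow m)
  have hpow : (C ^ m).map (↑) *ᵥ v = lam ^ m • v := by
    rw [show (C ^ m).map ((↑) : ℝ → ℂ) = C.map (↑) ^ m from C.map_pow Complex.ofRealHom m]
    exact pow_mulVec_eq_smul hCv m
  have hle : ‖lam‖ ^ m * ‖v‖ ≤ c * ‖v‖ := by
    simpa [hpow, norm_smul] using hcontract v hsum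
  have : ‖lam‖ ^ m < 1 := (le_of_mul_le_mul_right hle (norm_pos_iff.2 hv0)).trans_lt hc
  exact (pow_lt_one_iff_of_nonneg (norm_nonneg _) (by omega)).1 this

/-- **Lemma 1, spectral form.** If `C` is doubly stochastic and primitive, then
every complex eigenvalue of `C − (1/N)·J` has modulus strictly less than `1`. -/
theorem disagreement_matrix_spectral_radius_lt_one
    (N : ℕ) (hN : 1 ≤ N) (C : Matrix (Fin N) (Fin N) ℝ)
    (hCnn : ∀ l k, 0 ≤ C l k)
    (hCrow : ∀ l, ∑ k, C l k = 1)
    (hCcol : ∀ k, ∑ l, C l k = 1)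
    (hPrim : ∃ m, 1 ≤ m ∧ ∀ k l, 0 < (C ^ m) k l)
    (lam : ℂ)
    (hlam : lam ∈ spectrum ℂ ((C - (N : ℝ)⁻¹ • onesMatrix N).map (Complex.ofReal ·))) :
    ‖lam‖ < 1 :=
  disagreement_matrix_spectral_radius_lt_one_general N C hCrow hCcol hPrim lam hlam
end
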